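/- arXiv:2309.15799 — 2 statements merged into one kernel-verified Lean document; each statement's English description precedes it below -/
import Mathlib

section
/- Among all orderings of a finite multiset of positive sizes, the product p_n is maximized by the decreasing arrangement and minimized by the increasing arrangement: if x_1 ≥ x_2 ≥ ... ≥ x_n > 0 then for any permutation σ, p_n(x_1,...,x_n) ≥ p_n(x_{σ(1)},...,x_{σ(n)}) ≥ p_n(x_n,...,x_1). -/
open Finset

-- strict mono index bounds
lemma smono_lb {m n : ℕ} {f : Fin m → Fin n} (hf : StrictMono f) (i : Fin m) :
    i.val ≤ (f i).val := by
  obtain ⟨k, hk⟩ := i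
  induction k with
  | zero => simp
  | succ k ih =>
    have hk' : k < m := Nat.lt_of_succ_lt hk
    have h1 := ih hk'
    have h2 : f ⟨k, hk'⟩ < f ⟨k + 1, hk⟩ := hf (by simp [Fin.lt_def])
    have h3 := Fin.lt_def.mp h2
    simp only [Fin.val_mk] at h1 h3 ⊢
    omega

lemma smono_ub {m n : ℕ} {f : Fin m → Fin n} (hf : StrictMono f) (i : Fin m) :
    (f i).val + m ≤ n + i.val := by
  have hg : StrictMono (fun j : Fin m => Fin.rev (f (Fin.rev j))) := by
    intro a b hab
    exact Fin.rev_lt_rev.mpr (hf (Fin.rev_lt_rev.mpr hab))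
  have := smono_lb hg (Fin.rev i)
  simp only [Fin.rev_rev, Fin.val_rev] at this
  have h1 := (f i).isLt
  have h2 := i.isLt
  omega

lemma sum_orderEmb {n m : ℕ} (s : Finset (Fin n)) (h : s.card = m) (f : Fin n → ℝ) :
    ∑ i ∈ s, f i = ∑ i : Fin m, f (s.orderEmbOfFin h i) := by
  rw [← Finset.sum_image (f := f) (g := s.orderEmbOfFin h)
      (by intro a _ b _ hab; exact (s.orderEmbOfFin h).injective hab)]
  congr 1
  apply Finset.coe_injective
  rw [Finset.coe_image, Finset.coe_univ, Set.image_univ, Finset.range_orderEmbOfFin]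

lemma Ici_emb {n : ℕ} (k : Fin n) (h : (Ici k).card = n - k.val) (i : Fin (n - k.val)) :
    ((Ici k).orderEmbOfFin h i : Fin n) = ⟨k.val + i.val, by omega⟩ := by
  have : (fun i : Fin (n - k.val) => (⟨k.val + i.val, by omega⟩ : Fin n))
      = (Ici k).orderEmbOfFin h := by
    apply Finset.orderEmbOfFin_unique
    · intro i; simp [Finset.mem_Ici, Fin.le_def]
    · intro a b hab
      simp only [Fin.lt_def, Fin.val_mk]
      exact Nat.add_lt_add_left (Fin.lt_def.mp hab) _
  exact (congrFun this i).symm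

lemma card_image_Ici {n : ℕ} (k : Fin n) (σ : Equiv.Perm (Fin n)) :
    ((Ici k).image σ).card = n - k.val := by
  rw [Finset.card_image_of_injective _ σ.injective, Fin.card_Ici]

lemma L1 {n : ℕ} (x : Fin n → ℝ) (hdec : Antitone x) (σ : Equiv.Perm (Fin n)) (k : Fin n) :
    ∑ j ∈ Ici k, x j ≤ ∑ j ∈ Ici k, x (σ j) := by
  have hc : (Ici k).card = n - k.val := Fin.card_Ici k
  rw [show ∑ j ∈ Ici k, x (σ j) = ∑ j ∈ (Ici k).image σ, x j from
    (Finset.sum_image (by intro a _ b _ hab; exact σ.injective hab)).symm]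
  rw [sum_orderEmb _ hc, sum_orderEmb _ (card_image_Ici k σ)]
  apply Finset.sum_le_sum
  intro i _
  apply hdec
  have hub := smono_ub (((Ici k).image σ).orderEmbOfFin (card_image_Ici k σ)).strictMono i
  rw [Ici_emb k hc i, Fin.le_def]
  simp only [Fin.val_mk]
  omega

lemma L2 {n : ℕ} (x : Fin n → ℝ) (hdec : Antitone x) (σ : Equiv.Perm (Fin n)) (k : Fin n) :
    ∑ j ∈ Ici k, x (σ j) ≤ ∑ j ∈ Ici k, x (Fin.rev j) := by
  have hc : (Ici k).card = n - k.val := Fin.card_Ici k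
  have hrev : ∑ j ∈ Ici k, x (Fin.rev j) = ∑ i : Fin (n - k.val), x ⟨i.val, by omega⟩ := by
    refine Finset.sum_bij' (fun j hj => (⟨(Fin.rev j).val, by
        have hk := Finset.mem_Ici.mp hj
        have := Fin.le_def.mp hk
        have := j.isLt
        simp only [Fin.val_rev]
        omega⟩ : Fin (n - k.val)))
      (fun i _ => Fin.rev ⟨i.val, by omega⟩) (fun a ha => Finset.mem_univ _)
      (fun i _ => ?_) (fun a ha => ?_) (fun i _ => ?_) (fun a ha => ?_)
    · rw [Finset.mem_Ici, Fin.le_def, Fin.val_rev]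
      simp only [Fin.val_mk]
      have := i.isLt
      omega
    · have := Fin.le_def.mp (Finset.mem_Ici.mp ha)
      have := a.isLt
      ext
      simp only [Fin.val_rev, Fin.val_mk]
      omega
    · ext
      simp only [Fin.rev_rev, Fin.val_rev, Fin.val_mk]
      try omega
    · congr 1
  rw [show ∑ j ∈ Ici k, x (σ j) = ∑ j ∈ (Ici k).image σ, x j from
    (Finset.sum_image (by intro a _ b _ hab; exact σ.injective hab)).symm,
    hrev, sum_orderEmb _ (card_image_Ici k σ)]
  apply Finset.sum_le_sum
  intro i _
  apply hdec
  have hlb := smono_lb (((Ici k).image σ).orderEmbOfFin (card_image_Ici k σ)).strictMono i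
  rw [Fin.le_def]
  simpa using hlb

/-- Ranking probability `p_N(x_1,…,x_N) = ∏_k x_k / (x_k + x_{k+1} + ⋯ + x_N)`. -/
noncomputable def sbp {N : ℕ} (x : Fin N → ℝ) : ℝ :=
  ∏ k : Fin N, x k / ∑ j ∈ Finset.Ici k, x j

theorem decreasing_maximizes (n : ℕ) (x : Fin n → ℝ) (hpos : ∀ i, 0 < x i)
    (hdec : Antitone x) (σ : Equiv.Perm (Fin n)) :
    sbp (x ∘ Fin.rev) ≤ sbp (x ∘ σ) ∧ sbp (x ∘ σ) ≤ sbp x := by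
  have hP : (0:ℝ) < ∏ k : Fin n, x k := Finset.prod_pos (fun i _ => hpos i)
  have hS : ∀ (f : Fin n → Fin n) (k : Fin n), (0:ℝ) < ∑ j ∈ Ici k, x (f j) :=
    fun f k => Finset.sum_pos (fun j _ => hpos _) ⟨k, Finset.mem_Ici.mpr le_rfl⟩
  have hD : ∀ f : Fin n → Fin n, (0:ℝ) < ∏ k : Fin n, ∑ j ∈ Ici k, x (f j) :=
    fun f => Finset.prod_pos (fun k _ => hS f k)
  have key : ∀ τ : Equiv.Perm (Fin n),
      sbp (x ∘ τ) = (∏ k : Fin n, x k) / ∏ k : Fin n, ∑ j ∈ Ici k, x (τ j) := by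
    intro τ
    rw [sbp, Finset.prod_div_distrib]
    congr 1
    exact Equiv.prod_comp τ x
  have hxrev : sbp (x ∘ Fin.rev) = sbp (x ∘ Fin.revPerm) := rfl
  have hid : sbp x = sbp (x ∘ (Equiv.refl (Fin n))) := rfl
  constructor
  · rw [hxrev, key, key]
    apply div_le_div_of_nonneg_left hP.le (hD σ)
    exact Finset.prod_le_prod (fun k _ => (hS σ k).le) (fun k _ => L2 x hdec σ k)
  · rw [hid, key, key]
    apply div_le_div_of_nonneg_left hP.le (hD (Equiv.refl (Fin n)))
    exact Finset.prod_le_prod (fun k _ => (hS _ k).le) (fun k _ => L1 x hdec σ k)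
end

section
/- The insertion quotient identity: for positive reals x_1,...,x_{i-1}, x and 1 ≤ k ≤ i, the expression [∏_{ℓ=1}^{k-1} (x_ℓ+...+x_{i-1})/(x_ℓ+...+x_{i-1}+x)] · x/(x_k+...+x_{i-1}+x) equals p_i(x_1,...,x_{k-1},x,x_k,...,x_{i-1}) / p_{i-1}(x_1,...,x_{i-1}). -/
/-- Sum of the sizes with index `≥ ℓ` (0-based). -/
noncomputable def tailSum {n : ℕ} (x : Fin n → ℝ) (ℓ : ℕ) : ℝ :=
  ∑ j ∈ Finset.univ.filter (fun j : Fin n => ℓ ≤ (j : ℕ)), x j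

lemma tailSum_nonneg {n : ℕ} (x : Fin n → ℝ) (hx : ∀ j, 0 < x j) (ℓ : ℕ) :
    0 ≤ tailSum x ℓ := Finset.sum_nonneg fun j _ => (hx j).le

lemma tailSum_pos {n : ℕ} (x : Fin n → ℝ) (hx : ∀ j, 0 < x j) (i : Fin n) :
    0 < tailSum x (i : ℕ) := by
  refine Finset.sum_pos (fun j _ => hx j) ⟨i, ?_⟩
  simp

lemma Ici_sum' {n : ℕ} (m : Fin n) (f : Fin n → ℝ) :
    ∑ j ∈ Finset.Ici m, f j = ∑ j : Fin n, if m ≤ j then f j else 0 := by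
  rw [← Finset.sum_filter]; congr 1; ext j
  simp only [Finset.mem_filter, Finset.mem_univ, true_and, Finset.mem_Ici]

lemma Ici_eq_tail {n : ℕ} (x : Fin n → ℝ) (i : Fin n) :
    ∑ j ∈ Finset.Ici i, x j = tailSum x (i : ℕ) := by
  rw [tailSum]; congr 1; ext j
  simp only [Finset.mem_filter, Finset.mem_univ, true_and, Finset.mem_Ici, Fin.le_def]

lemma le_succAbove_iff' {n : ℕ} (k : Fin (n+1)) (i : Fin n) :
    k ≤ k.succAbove i ↔ (k : ℕ) ≤ (i : ℕ) := by
  rcases lt_or_ge (i.castSucc) k with h | h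
  · rw [Fin.succAbove_of_castSucc_lt _ _ h]
    simp only [Fin.le_def, Fin.lt_def, Fin.coe_castSucc] at h ⊢
    try omega
  · rw [Fin.succAbove_of_le_castSucc _ _ h]
    simp only [Fin.le_def, Fin.coe_castSucc, Fin.val_succ] at h ⊢
    try omega

lemma succAbove_le_iff' {n : ℕ} (k : Fin (n+1)) (i : Fin n) :
    k.succAbove i ≤ k ↔ (i : ℕ) < (k : ℕ) := by
  rcases lt_or_ge (i.castSucc) k with h | h
  · rw [Fin.succAbove_of_castSucc_lt _ _ h]
    simp only [Fin.le_def, Fin.lt_def, Fin.coe_castSucc] at h ⊢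
    omega
  · rw [Fin.succAbove_of_le_castSucc _ _ h]
    simp only [Fin.le_def, Fin.lt_def, Fin.coe_castSucc, Fin.val_succ] at h ⊢
    omega

lemma tail_at_k {n : ℕ} (x : Fin n → ℝ) (a : ℝ) (k : Fin (n+1)) :
    ∑ j ∈ Finset.Ici k, k.insertNth a x j = tailSum x (k : ℕ) + a := by
  rw [Ici_sum', Fin.sum_univ_succAbove _ k]
  simp only [Fin.insertNth_apply_same, Fin.insertNth_apply_succAbove, le_refl, if_pos]
  rw [add_comm, tailSum, Finset.sum_filter]
  congr 1
  refine Finset.sum_congr rfl fun i _ => ?_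
  congr 1
  exact propext (le_succAbove_iff' k i)

lemma tail_at_succAbove {n : ℕ} (x : Fin n → ℝ) (a : ℝ) (k : Fin (n+1)) (i : Fin n) :
    ∑ j ∈ Finset.Ici (k.succAbove i), k.insertNth a x j =
      tailSum x (i : ℕ) + if (i : ℕ) < (k : ℕ) then a else 0 := by
  rw [Ici_sum', Fin.sum_univ_succAbove _ k]
  simp only [Fin.insertNth_apply_same, Fin.insertNth_apply_succAbove,
    Fin.succAbove_le_succAbove_iff]
  rw [add_comm]
  congr 1
  · rw [tailSum, Finset.sum_filter]
    refine Finset.sum_congr rfl fun i' _ => ?_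
    try congr 1
    try exact propext Fin.le_def
  · congr 1
    exact propext (succAbove_le_iff' k i)

lemma range_to_fin {n : ℕ} (K : ℕ) (hK : K ≤ n) (f : ℕ → ℝ) :
    ∏ ℓ ∈ Finset.range K, f ℓ = ∏ i : Fin n, if (i : ℕ) < K then f i else 1 := by
  rw [Fin.prod_univ_eq_prod_range (fun ℓ => if ℓ < K then f ℓ else 1) n,
    ← Finset.prod_filter]
  congr 1
  ext ℓ
  simp only [Finset.mem_filter, Finset.mem_range]
  omega

theorem insertion_quotient (n : ℕ) (x : Fin n → ℝ) (a : ℝ)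
    (hx : ∀ j, 0 < x j) (ha : 0 < a) (k : Fin (n + 1)) :
    (∏ ℓ ∈ Finset.range k, tailSum x ℓ / (tailSum x ℓ + a)) *
        (a / (tailSum x k + a)) =
      sbp (k.insertNth a x) / sbp x := by
  have hS : ∀ i : Fin n, 0 < tailSum x (i : ℕ) := tailSum_pos x hx
  have hSa : ∀ ℓ : ℕ, 0 < tailSum x ℓ + a := fun ℓ => by
    have := tailSum_nonneg x hx ℓ; linarith
  have hsbpx : 0 < sbp x := by
    rw [sbp]
    refine Finset.prod_pos fun i _ => ?_
    rw [Ici_eq_tail x i]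
    exact div_pos (hx i) (hS i)
  rw [eq_div_iff (ne_of_gt hsbpx)]
  simp only [sbp]
  rw [Fin.prod_univ_succAbove _ k]
  simp only [tail_at_k, tail_at_succAbove, Fin.insertNth_apply_same,
    Fin.insertNth_apply_succAbove]
  simp only [Ici_eq_tail]
  rw [range_to_fin (k : ℕ) (Fin.is_le k) _]
  rw [mul_comm (∏ i : Fin n, if (i:ℕ) < (k:ℕ) then tailSum x i / (tailSum x i + a) else 1) _,
    mul_assoc, ← Finset.prod_mul_distrib]
  congr 1
  refine Finset.prod_congr rfl fun i _ => ?_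
  by_cases h : (i : ℕ) < (k : ℕ)
  · simp only [h, if_pos]
    rw [div_mul_div_comm, mul_comm (tailSum x (i:ℕ) + a) (tailSum x (i:ℕ)),
      mul_div_mul_left _ _ (ne_of_gt (hS i))]
  · simp [h]
end
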